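/- arXiv:1103.4096 — 2 statements merged into one kernel-verified Lean document; each statement's English description precedes it below -/
import Mathlib

section
/- Let (G, H, α) be a crossed module of groups, let I be a linearly ordered index set, and let λ : I × I → H and g : I × I × I → G satisfy the cocycle identities λ_{ij} · λ_{jk} = α(g_{ijk}) · λ_{ik} and (^{λ_{ij}} g_{jkl}) · g_{ijl} = g_{ijk} · g_{ikl} for all i, j, k, l ∈ I. Define r_i := α(g_{iii}) ∈ H and θ_{ij} ∈ G by θ_{ij} := g_{iji}^{-1} g_{iii}^{-1} if i < j, θ_{ii} := g_{iii}^{-1}, and θ_{ij} := 1 if i > j. Define λ'_{ij} := α(θ_{ij}) · r_i · λ_{ij} · r_j^{-1} and g'_{ijk} := (^{λ'_{ij}} θ_{jk}) · θ_{ij} · (^{r_i} g_{ijk}) · θ_{ik}^{-1}. Then (λ', g') again satisfies the two cocycle identities, and it is normalized: λ'_{ii} = 1 for all i ∈ I, and g'_{ijk} = 1 whenever at least two of the indices i, j, k coincide. -/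
/-- Every nonabelian 1-cocycle `(λ, g)` for a crossed module
`(G, H, α)` over a linearly ordered index set is cohomologous, via the
coboundary `(r, θ)` with `r_i = α(g_{iii})` and
`θ_{ij} = g_{iji}⁻¹ g_{iii}⁻¹` for `i < j`, `θ_{ii} = g_{iii}⁻¹`, `θ_{ij} = 1` for `i > j`,
to a cocycle `(λ', g')` which again satisfies the cocycle identities and is
normalized: `λ'_{ii} = 1` and `g'_{ijk} = 1` whenever two indices agree. -/
theorem crossed_module_cocycle_normalization
    {G H : Type*} [Group G] [Group H] [MulDistribMulAction H G]
    (α : G →* H)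
    (hpeiffer : ∀ g g' : G, α g' • g = g' * g * g'⁻¹)
    (hequivar : ∀ (h : H) (g : G), α (h • g) = h * α g * h⁻¹)
    {I : Type*} [LinearOrder I] (lam : I → I → H) (g : I → I → I → G)
    (hcoc1 : ∀ i j k, lam i j * lam j k = α (g i j k) * lam i k)
    (hcoc2 : ∀ i j k l, (lam i j • g j k l) * g i j l = g i j k * g i k l)
    (r : I → H) (θ : I → I → G) (lam' : I → I → H) (g' : I → I → I → G)
    (hr : ∀ i, r i = α (g i i i))
    (hθ : ∀ i j, θ i j =
      if i < j then (g i j i)⁻¹ * (g i i i)⁻¹ else if i = j then (g i i i)⁻¹ else 1)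
    (hlam' : ∀ i j, lam' i j = α (θ i j) * r i * lam i j * (r j)⁻¹)
    (hg' : ∀ i j k, g' i j k = (lam' i j • θ j k) * θ i j * (r i • g i j k) * (θ i k)⁻¹) :
    (∀ i j k, lam' i j * lam' j k = α (g' i j k) * lam' i k) ∧
      (∀ i j k l, (lam' i j • g' j k l) * g' i j l = g' i j k * g' i k l) ∧
      (∀ i, lam' i i = 1) ∧
      (∀ i j k, i = j ∨ j = k ∨ i = k → g' i j k = 1) := by
  have hpe : ∀ (a x : G), α a • x = a * x * a⁻¹ := fun a x => hpeiffer x a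
  have hrs : ∀ i (x : G), r i • x = g i i i * x * (g i i i)⁻¹ := by
    intro i x; rw [hr, hpe]
  have hris : ∀ i (x : G), (r i)⁻¹ • x = (g i i i)⁻¹ * x * g i i i := by
    intro i x; rw [hr, ← map_inv, hpe, inv_inv]
  have hgk : ∀ i j k, α (g i j k) = lam i j * lam j k * (lam i k)⁻¹ := by
    intro i j k; rw [hcoc1 i j k]; group
  have hαy : ∀ i j k,
      α ((lam' i j • θ j k) * θ i j * (r i • g i j k)) =
        lam' i j * lam' j k * r k * (lam i k)⁻¹ * (r i)⁻¹ := by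
    intro i j k
    rw [map_mul, map_mul, hequivar, hequivar, hgk i j k, hlam' i j, hlam' j k]
    group
  have claim1 : ∀ i j k, lam' i j * lam' j k = α (g' i j k) * lam' i k := by
    intro i j k
    rw [hg', map_mul, map_inv, hαy, hlam' i k]
    group
  have hmix : ∀ i j (x : G),
      (lam' i j * r j) • x = θ i j * ((r i * lam i j) • x) * (θ i j)⁻¹ := by
    intro i j x
    have h : lam' i j * r j = α (θ i j) * (r i * lam i j) := by rw [hlam']; group
    rw [h, mul_smul, hpe]
  have hconj : ∀ i k (x : G), (θ i k)⁻¹ * x * θ i k = (α (θ i k))⁻¹ • x := by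
    intro i k x
    have h := hpe (θ i k)⁻¹ x
    rw [map_inv, inv_inv] at h
    exact h.symm
  have hmove2 : ∀ (a : G) (s : H) (x : G), a * (s • x) = ((α a * s) • x) * a := by
    intro a s x
    rw [mul_smul, hpe]; group
  have claim2 : ∀ i j k l, (lam' i j • g' j k l) * g' i j l = g' i j k * g' i k l := by
    intro i j k l
    have hL : (lam' i j • g' j k l) * g' i j l =
        ((lam' i j * lam' j k) • θ k l) * (lam' i j • θ j k) * θ i j *
          (r i • g i j k) * (r i • g i k l) * (θ i l)⁻¹ := by
      calc (lam' i j • g' j k l) * g' i j l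
          = (lam' i j • ((lam' j k • θ k l) * θ j k * (r j • g j k l) * (θ j l)⁻¹)) *
            ((lam' i j • θ j l) * θ i j * (r i • g i j l) * (θ i l)⁻¹) := by
            rw [hg', hg']
        _ = ((lam' i j * lam' j k) • θ k l) * (lam' i j • θ j k) *
            ((lam' i j * r j) • g j k l) * (lam' i j • θ j l)⁻¹ *
            ((lam' i j • θ j l) * θ i j * (r i • g i j l) * (θ i l)⁻¹) := by
            simp only [smul_mul', smul_inv', ← mul_smul]
        _ = ((lam' i j * lam' j k) • θ k l) * (lam' i j • θ j k) * θ i j *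
            ((r i • (lam i j • g j k l)) * (r i • g i j l)) * (θ i l)⁻¹ := by
            rw [hmix, mul_smul (r i) (lam i j) (g j k l)]; group
        _ = ((lam' i j * lam' j k) • θ k l) * (lam' i j • θ j k) * θ i j *
            (r i • (g i j k * g i k l)) * (θ i l)⁻¹ := by
            rw [← smul_mul', hcoc2]
        _ = ((lam' i j * lam' j k) • θ k l) * (lam' i j • θ j k) * θ i j *
            (r i • g i j k) * (r i • g i k l) * (θ i l)⁻¹ := by
            rw [smul_mul']; group
    have hR : g' i j k * g' i k l =
        ((lam' i j * lam' j k) • θ k l) * (lam' i j • θ j k) * θ i j *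
          (r i • g i j k) * (r i • g i k l) * (θ i l)⁻¹ := by
      calc g' i j k * g' i k l
          = ((lam' i j • θ j k) * θ i j * (r i • g i j k) * (θ i k)⁻¹) *
            ((lam' i k • θ k l) * θ i k * (r i • g i k l) * (θ i l)⁻¹) := by
            rw [hg', hg']
        _ = (lam' i j • θ j k) * θ i j * (r i • g i j k) *
            ((θ i k)⁻¹ * (lam' i k • θ k l) * θ i k) *
            ((r i • g i k l) * (θ i l)⁻¹) := by group
        _ = (lam' i j • θ j k) * θ i j * (r i • g i j k) *
            (((α (θ i k))⁻¹ * lam' i k) • θ k l) *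
            ((r i • g i k l) * (θ i l)⁻¹) := by
            rw [hconj, ← mul_smul]
        _ = (lam' i j • θ j k) * θ i j * (r i • g i j k) *
            ((r i * lam i k * (r k)⁻¹) • θ k l) *
            ((r i • g i k l) * (θ i l)⁻¹) := by
            rw [show (α (θ i k))⁻¹ * lam' i k = r i * lam i k * (r k)⁻¹ by
              rw [hlam']; group]
        _ = ((α ((lam' i j • θ j k) * θ i j * (r i • g i j k)) *
              (r i * lam i k * (r k)⁻¹)) • θ k l) *
            ((lam' i j • θ j k) * θ i j * (r i • g i j k)) *
            ((r i • g i k l) * (θ i l)⁻¹) := by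
            rw [hmove2]
        _ = ((lam' i j * lam' j k) • θ k l) * (lam' i j • θ j k) * θ i j *
            (r i • g i j k) * (r i • g i k l) * (θ i l)⁻¹ := by
            rw [show α ((lam' i j • θ j k) * θ i j * (r i • g i j k)) *
                (r i * lam i k * (r k)⁻¹) = lam' i j * lam' j k by
              rw [hαy]; group]
            group
    rw [hL, hR]
  have hlamii : ∀ i, lam i i = α (g i i i) := by
    intro i
    exact mul_right_cancel (hcoc1 i i i)
  have claim3 : ∀ i, lam' i i = 1 := by
    intro i
    rw [hlam' i i, hθ i i, if_neg (lt_irrefl i), if_pos rfl, map_inv, hlamii, hr]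
    group
  have hD : ∀ i l, g i i l = g i i i := by
    intro i l
    have h2 : lam i i • g i i l = g i i i := mul_right_cancel (hcoc2 i i i l)
    rw [hlamii, hpe, mul_inv_eq_iff_eq_mul] at h2
    exact mul_left_cancel h2
  have hC : ∀ i j, lam i j • g j j j = g i j j := by
    intro i j
    exact mul_right_cancel (hcoc2 i j j j)
  have hE : ∀ i j, lam i j • g j i j = g i j i * g i i i * (g i j j)⁻¹ := by
    intro i j
    have h := hcoc2 i j i j
    rw [hD i j] at h
    rw [eq_mul_inv_iff_mul_eq]
    exact h
  have hΛsmul : ∀ i j (x : G),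
      lam' i j • x = θ i j * (r i • (lam i j • ((r j)⁻¹ • x))) * (θ i j)⁻¹ := by
    intro i j x
    rw [hlam', mul_smul, mul_smul, mul_smul, hpe]
  have hgii : ∀ i k, g' i i k = 1 := by
    intro i k
    rw [hg' i i k, claim3 i, one_smul, hθ i i, if_neg (lt_irrefl i), if_pos rfl,
      hD i k, hrs]
    group
  have hgjj : ∀ i j, g' i j j = 1 := by
    intro i j
    have h1 : (r j)⁻¹ • (g j j j)⁻¹ = (g j j j)⁻¹ := by rw [hris]; group
    rw [hg' i j j, hθ j j, if_neg (lt_irrefl j), if_pos rfl, hΛsmul, h1,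
      smul_inv', hC, hrs i ((g i j j)⁻¹), hrs i (g i j j)]
    group
  have hgiji : ∀ i j, g' i j i = 1 := by
    intro i j
    rcases lt_trichotomy i j with hij | hij | hij
    · rw [hg' i j i, hθ j i, if_neg (asymm hij), if_neg hij.ne', smul_one,
        hθ i j, if_pos hij, hθ i i, if_neg (lt_irrefl i), if_pos rfl, hrs]
      group
    · subst hij; exact hgii i i
    · have h1 : (r j)⁻¹ • ((g j i j)⁻¹ * (g j j j)⁻¹) = (g j j j)⁻¹ * (g j i j)⁻¹ := by
        rw [hris]; group
      have h2 : lam i j • ((g j j j)⁻¹ * (g j i j)⁻¹) = (g i i i)⁻¹ * (g i j i)⁻¹ := by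
        rw [smul_mul', smul_inv', smul_inv', hC, hE]; group
      rw [hg' i j i, hθ j i, if_pos hij, hΛsmul, hθ i j, if_neg (asymm hij),
        if_neg hij.ne', hθ i i, if_neg (lt_irrefl i), if_pos rfl, h1, h2,
        hrs i ((g i i i)⁻¹ * (g i j i)⁻¹), hrs i (g i j i)]
      group
  refine ⟨claim1, claim2, claim3, ?_⟩
  intro i j k h
  rcases h with h | h | h
  · subst h; exact hgii i k
  · subst h; exact hgjj i j
  · subst h; exact hgiji i j
end

section
/- Let π : Y → M be a continuous surjection between topological spaces that admits local continuous sections: every point of M has an open neighborhood U together with a continuous map s : U → Y with π ∘ s = id_U. Let V be a topological space and let E → Y be a locally trivial fiber bundle with fiber V. Suppose given a continuous isomorphism of fiber bundles φ : π₂*E → π₁*E over the fiber product Y^[2] = {(y₁, y₂) ∈ Y × Y : π(y₁) = π(y₂)} — i.e., for every (y₁, y₂) ∈ Y^[2] a homeomorphism φ_{(y₁,y₂)} : E_{y₂} → E_{y₁} of the fibers, depending continuously on (y₁, y₂) as a map of total spaces — such that over Y^[3] the cocycle condition φ_{(y₁,y₂)} ∘ φ_{(y₂,y₃)} = φ_{(y₁,y₃)}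 holds for all (y₁, y₂, y₃) with π(y₁) = π(y₂) = π(y₃). Then there exists a locally trivial fiber bundle Ẽ → M with fiber V and an isomorphism of fiber bundles E ≅ π*Ẽ over Y. -/
/-!
The descended bundle is the quotient of `E` by `e ~ e'` iff `e = φ_{(pE e, pE e')} e'`; the
cocycle condition makes this an equivalence relation (reflexivity because the cocycle condition
and injectivity of `φ` force `φ` to be the identity over the diagonal). Over an open set `O ⊆ M`
with a section `σ`, transporting into the fibres over `σ` identifies the quotient over `O` with
`σ*E`, which is trivial where `σ` lands in a trivializing open set of `E`. The map
`e ↦ (pE e, [e])` is the isomorphism `E ≅ π*Ẽ`; its inverse `(y, [e]) ↦ φ_{(y, pE e)} e` is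
continuous because over `O` it factors through `σ*E`.
-/

universe u v w z

def IsLocTrivBundle {E X : Type*} [TopologicalSpace E] [TopologicalSpace X]
    (V : Type*) [TopologicalSpace V] (p : E → X) : Prop :=
  Continuous p ∧ ∀ x : X, ∃ U : Set X, IsOpen U ∧ x ∈ U ∧
    ∃ e : (p ⁻¹' U) ≃ₜ U × V, ∀ q : p ⁻¹' U, ((e q).1 : X) = p (q : E)

open Topology

section LocalSections

variable {Y M : Type*} [TopologicalSpace Y] [TopologicalSpace M]

def HasLocalSections (π : Y → M) : Prop :=
  ∀ m : M, ∃ U : Set M, IsOpen U ∧ m ∈ U ∧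
    ∃ s : U → Y, Continuous s ∧ ∀ u : U, π (s u) = (u : M)

theorem exists_localSection_mem {π : Y → M} {U : Set M} (hU : IsOpen U) {s : U → Y}
    (hs : Continuous s) (hsπ : ∀ u : U, π (s u) = (u : M)) {W : Set Y} (hW : IsOpen W)
    {m : M} (hmU : m ∈ U) (hmW : s ⟨m, hmU⟩ ∈ W) :
    ∃ O : Set M, IsOpen O ∧ m ∈ O ∧
      ∃ σ : O → Y, Continuous σ ∧ (∀ o : O, π (σ o) = (o : M)) ∧ ∀ o : O, σ o ∈ W := by
  let O : Set M := {x | ∃ hx : x ∈ U, s ⟨x, hx⟩ ∈ W}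
  have hO : O = Subtype.val '' (s ⁻¹' W) := by
    ext x
    simp [O]
  refine ⟨O, hO ▸ hU.isOpenMap_subtype_val _ (hW.preimage hs), ⟨hmU, hmW⟩,
    fun o => s ⟨o, o.2.1⟩, ?_, fun o => hsπ _, fun o => o.2.2⟩
  exact hs.comp (Continuous.subtype_mk continuous_subtype_val _)

end LocalSections

theorem IsLocTrivBundle.comp_homeomorph {E E' X V : Type*} [TopologicalSpace E]
    [TopologicalSpace E'] [TopologicalSpace X] [TopologicalSpace V] {p : E → X}
    (hp : IsLocTrivBundle V p) (f : E' ≃ₜ E) : IsLocTrivBundle V (p ∘ f) := by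
  refine ⟨hp.1.comp f.continuous, fun x => ?_⟩
  obtain ⟨U, hU, hxU, e, he⟩ := hp.2 x
  exact ⟨U, hU, hxU, (f.subtype fun _ => Iff.rfl).trans e, fun q => he _⟩

def pullbackTrivialization {O Y E V : Type*} [TopologicalSpace O] [TopologicalSpace Y]
    [TopologicalSpace E] [TopologicalSpace V] {pE : E → Y} {W : Set Y}
    (triv : pE ⁻¹' W ≃ₜ W × V) (htriv : ∀ q : pE ⁻¹' W, ((triv q).1 : Y) = pE q)
    (σ : O → Y) (hσ : Continuous σ) (hσW : ∀ o, σ o ∈ W) :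
    {q : O × E // σ q.1 = pE q.2} ≃ₜ O × V where
  toFun q := (q.1.1, (triv ⟨q.1.2, show pE q.1.2 ∈ W from q.2 ▸ hσW q.1.1⟩).2)
  invFun p := ⟨(p.1, triv.symm (⟨σ p.1, hσW p.1⟩, p.2)), by
    rw [← htriv, Homeomorph.apply_symm_apply]⟩
  left_inv q := by
    have hW : pE q.1.2 ∈ W := q.2 ▸ hσW q.1.1
    have hq : triv ⟨q.1.2, hW⟩ = (⟨σ q.1.1, hσW q.1.1⟩, (triv ⟨q.1.2, hW⟩).2) :=
      Prod.ext (Subtype.ext ((htriv _).trans q.2.symm)) rfl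
    refine Subtype.ext (Prod.ext rfl ?_)
    dsimp only
    rw [← hq, Homeomorph.symm_apply_apply]
  right_inv p := by
    refine Prod.ext rfl ?_
    simp only [Subtype.coe_eta, Homeomorph.apply_symm_apply]
  continuous_toFun := by fun_prop
  continuous_invFun := by
    refine Continuous.subtype_mk (continuous_fst.prodMk ?_) _
    exact continuous_subtype_val.comp (triv.symm.continuous.comp
      ((Continuous.subtype_mk (hσ.comp continuous_fst) _).prodMk continuous_snd))

/-- `transport y e h` is `φ_{(y, pE e)} e`, a point of the fibre over `y`. -/
structure DescentDatum {Y M E : Type*} [TopologicalSpace Y] [TopologicalSpace E]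
    (π : Y → M) (pE : E → Y) where
  transport : ∀ (y : Y) (e : E), π y = π (pE e) → E
  continuous_transport :
    Continuous fun q : {q : Y × E // π q.1 = π (pE q.2)} => transport q.1.1 q.1.2 q.2
  pE_transport : ∀ y e h, pE (transport y e h) = y
  transport_self : ∀ e, transport (pE e) e rfl = e
  transport_transport : ∀ y₁ y₂ e h₂ h₁ h,
    transport y₁ (transport y₂ e h₂) h₁ = transport y₁ e h

namespace DescentDatum

variable {Y M E : Type*} [TopologicalSpace Y] [TopologicalSpace E]
  {π : Y → M} {pE : E → Y} (D : DescentDatum π pE)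

theorem transport_congr {y y' : Y} {e e' : E} (hy : y = y') (he : e = e')
    {h : π y = π (pE e)} {h' : π y' = π (pE e')} : D.transport y e h = D.transport y' e' h' := by
  subst hy he; rfl

def Rel (e e' : E) : Prop :=
  ∃ h : π (pE e) = π (pE e'), D.transport (pE e) e' h = e

theorem rel_transport (y : Y) (e : E) (h : π y = π (pE e)) : D.Rel (D.transport y e h) e :=
  ⟨by rw [D.pE_transport]; exact h, D.transport_congr (D.pE_transport y e h) rfl⟩

theorem transport_eq_of_rel {e e' : E} (hr : D.Rel e e') (y : Y) (h : π y = π (pE e))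
    (h' : π y = π (pE e')) : D.transport y e h = D.transport y e' h' := by
  obtain ⟨h₀, he⟩ := hr
  calc D.transport y e h
      = D.transport y (D.transport (pE e) e' h₀) (by rwa [D.pE_transport]) :=
        D.transport_congr rfl he.symm
    _ = D.transport y e' h' := D.transport_transport ..

theorem rel_equivalence : Equivalence D.Rel where
  refl e := ⟨rfl, D.transport_self e⟩
  symm {_ e₂} hr := ⟨hr.1.symm, (D.transport_eq_of_rel hr _ _ rfl).trans (D.transport_self e₂)⟩
  trans h₁₂ h₂₃ := ⟨h₁₂.1.trans h₂₃.1,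
    (D.transport_eq_of_rel h₂₃ _ h₁₂.1 _).symm.trans h₁₂.2⟩

def setoid : Setoid E := ⟨D.Rel, D.rel_equivalence⟩

def Total : Type _ := Quotient D.setoid

instance : TopologicalSpace D.Total := instTopologicalSpaceQuotient

def toTotal (e : E) : D.Total := Quotient.mk D.setoid e

def proj : D.Total → M := Quotient.lift (fun e => π (pE e)) fun _ _ h => h.1

theorem toTotal_eq_toTotal_iff {e e' : E} : D.toTotal e = D.toTotal e' ↔ D.Rel e e' := Quotient.eq

theorem toTotal_out (x : D.Total) : D.toTotal x.out = x := Quotient.out_eq x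

theorem toTotal_transport (y : Y) (e : E) (h : π y = π (pE e)) :
    D.toTotal (D.transport y e h) = D.toTotal e :=
  D.toTotal_eq_toTotal_iff.2 (D.rel_transport y e h)

theorem transport_eq_of_toTotal_eq {e e' : E} (he : D.toTotal e = D.toTotal e') (y : Y)
    (h : π y = π (pE e)) (h' : π y = π (pE e')) : D.transport y e h = D.transport y e' h' :=
  D.transport_eq_of_rel (D.toTotal_eq_toTotal_iff.1 he) y h h'

theorem isQuotientMap_toTotal : IsQuotientMap D.toTotal := isQuotientMap_quotient_mk'

theorem continuous_proj [TopologicalSpace M] (hπ : Continuous π) (hpE : Continuous pE) :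
    Continuous D.proj :=
  Continuous.quotient_lift (hπ.comp hpE) _

section LocalSection

variable {O : Set M} (σ : O → Y) (hσ : ∀ o : O, π (σ o) = (o : M))

noncomputable def lift (x : D.proj ⁻¹' O) : E :=
  D.transport (σ ⟨D.proj x, x.2⟩) x.1.out
    ((hσ _).trans (congrArg D.proj (D.toTotal_out x.1).symm))

theorem toTotal_lift (x : D.proj ⁻¹' O) : D.toTotal (D.lift σ hσ x) = x.1 :=
  (D.toTotal_transport ..).trans (D.toTotal_out x.1)

theorem pE_lift (x : D.proj ⁻¹' O) : pE (D.lift σ hσ x) = σ ⟨D.proj x, x.2⟩ :=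
  D.pE_transport ..

theorem lift_toTotal (e : E) (he : π (pE e) ∈ O) :
    D.lift σ hσ ⟨D.toTotal e, he⟩ = D.transport (σ ⟨π (pE e), he⟩) e (hσ _) :=
  D.transport_eq_of_toTotal_eq (D.toTotal_out (D.toTotal e)) ..

theorem continuous_lift [TopologicalSpace M] (hO : IsOpen O) (hσc : Continuous σ)
    (hπ : Continuous π) (hpE : Continuous pE) : Continuous (D.lift σ hσ) := by
  have hq := D.isQuotientMap_toTotal.restrictPreimage_isOpen
    (hO.preimage (D.continuous_proj hπ hpE))
  refine hq.continuous_iff.2 ?_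
  have hlift : D.lift σ hσ ∘ (D.proj ⁻¹' O).restrictPreimage D.toTotal
      = fun e => D.transport (σ ⟨π (pE e.1), e.2⟩) e.1 (hσ _) :=
    funext fun e => D.lift_toTotal σ hσ e.1 e.2
  rw [hlift]
  refine D.continuous_transport.comp (Continuous.subtype_mk (Continuous.prodMk ?_
    continuous_subtype_val) fun _ => hσ _)
  exact hσc.comp (Continuous.subtype_mk ((hπ.comp hpE).comp continuous_subtype_val) fun e => e.2)

noncomputable def sectionHomeomorph [TopologicalSpace M] (hO : IsOpen O) (hσc : Continuous σ)
    (hπ : Continuous π) (hpE : Continuous pE) : D.proj ⁻¹' O ≃ₜ {q : O × E // σ q.1 = pE q.2} where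
  toFun x := ⟨(⟨D.proj x, x.2⟩, D.lift σ hσ x), (D.pE_lift σ hσ x).symm⟩
  invFun q := ⟨D.toTotal q.1.2, show π (pE q.1.2) ∈ O by rw [← q.2, hσ]; exact q.1.1.2⟩
  left_inv x := Subtype.ext (D.toTotal_lift σ hσ x)
  right_inv q := by
    have hproj : π (pE q.1.2) = q.1.1 := by rw [← q.2, hσ]
    have hσq : σ ⟨π (pE q.1.2), hproj ▸ q.1.1.2⟩ = pE q.1.2 :=
      (congrArg σ (Subtype.ext hproj)).trans q.2
    refine Subtype.ext (Prod.ext (Subtype.ext hproj) ?_)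
    exact (D.lift_toTotal σ hσ _ _).trans ((D.transport_congr hσq rfl).trans (D.transport_self _))
  continuous_toFun := by
    refine Continuous.subtype_mk (Continuous.prodMk ?_ (D.continuous_lift σ hσ hO hσc hπ hpE)) _
    exact Continuous.subtype_mk ((D.continuous_proj hπ hpE).comp continuous_subtype_val) _
  continuous_invFun := Continuous.subtype_mk
    (D.isQuotientMap_toTotal.continuous.comp (continuous_snd.comp continuous_subtype_val)) _

end LocalSection

theorem isLocTrivBundle [TopologicalSpace M] {V : Type*} [TopologicalSpace V]
    (hπ : Continuous π) (hE : IsLocTrivBundle V pE) (hsec : HasLocalSections π) :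
    IsLocTrivBundle V D.proj := by
  refine ⟨D.continuous_proj hπ hE.1, fun m => ?_⟩
  obtain ⟨U, hU, hmU, s, hs, hsπ⟩ := hsec m
  obtain ⟨W, hW, hmW, triv, htriv⟩ := hE.2 (s ⟨m, hmU⟩)
  obtain ⟨O, hO, hmO, σ, hσc, hσ, hσW⟩ := exists_localSection_mem hU hs hsπ hW hmU hmW
  exact ⟨O, hO, hmO, (D.sectionHomeomorph σ hσ hO hσc hπ hE.1).trans
    (pullbackTrivialization triv htriv σ hσc hσW), fun _ => rfl⟩

noncomputable def ofPullback (q : {q : Y × D.Total // D.proj q.2 = π q.1}) : E :=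
  D.transport q.1.1 q.1.2.out (q.2.symm.trans (congrArg D.proj (D.toTotal_out q.1.2).symm))

theorem continuous_ofPullback [TopologicalSpace M] (hπ : Continuous π) (hpE : Continuous pE)
    (hsec : HasLocalSections π) : Continuous D.ofPullback := by
  refine continuous_iff_continuousAt.2 fun q => ?_
  obtain ⟨U, hU, hqU, s, hs, hsπ⟩ := hsec (π q.1.1)
  let S : Set {q : Y × D.Total // D.proj q.2 = π q.1} := {q | π q.1.1 ∈ U}
  have hS : IsOpen S := hU.preimage (hπ.comp (continuous_fst.comp continuous_subtype_val))
  have hmem (q : S) : q.1.1.2 ∈ D.proj ⁻¹' U := by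
    change D.proj _ ∈ U
    rw [q.1.2]
    exact q.2
  have hproj (q : S) : π q.1.1.1 = π (pE (D.lift s hsπ ⟨q.1.1.2, hmem q⟩)) := by
    rw [D.pE_lift, hsπ]
    exact q.1.2.symm
  -- Over `U`, the representative `x.out` may be replaced by the continuous choice `D.lift s`.
  have hlocal : S.domRestrict D.ofPullback
      = fun q => D.transport q.1.1.1 (D.lift s hsπ ⟨q.1.1.2, hmem q⟩) (hproj q) :=
    funext fun q => D.transport_eq_of_toTotal_eq
      ((D.toTotal_out _).trans (D.toTotal_lift s hsπ ⟨q.1.1.2, hmem q⟩).symm) ..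
  refine ContinuousOn.continuousAt ?_ (hS.mem_nhds hqU)
  rw [continuousOn_iff_continuous_domRestrict, hlocal]
  refine D.continuous_transport.comp (Continuous.subtype_mk (Continuous.prodMk ?_ ?_) hproj)
  · exact continuous_fst.comp (continuous_subtype_val.comp continuous_subtype_val)
  · refine (D.continuous_lift s hsπ hU hs hπ hpE).comp (Continuous.subtype_mk ?_ hmem)
    exact continuous_snd.comp (continuous_subtype_val.comp continuous_subtype_val)

noncomputable def pullbackHomeomorph [TopologicalSpace M] (hπ : Continuous π)
    (hpE : Continuous pE) (hsec : HasLocalSections π) :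
    E ≃ₜ {q : Y × D.Total // D.proj q.2 = π q.1} where
  toFun e := ⟨(pE e, D.toTotal e), rfl⟩
  invFun := D.ofPullback
  left_inv e := (D.transport_eq_of_toTotal_eq (D.toTotal_out _) _ _ rfl).trans (D.transport_self e)
  right_inv _ := Subtype.ext (Prod.ext (D.pE_transport ..) ((D.toTotal_transport ..).trans
    (D.toTotal_out _)))
  continuous_toFun := Continuous.subtype_mk (hpE.prodMk D.isQuotientMap_toTotal.continuous) _
  continuous_invFun := D.continuous_ofPullback hπ hpE hsec

end DescentDatum

section OfHomeomorph

variable {Y M E : Type*} [TopologicalSpace Y] [TopologicalSpace E] {π : Y → M} {pE : E → Y}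
  (φ : {q : {p : Y × Y // π p.1 = π p.2} × E // pE q.2 = q.1.1.2} ≃ₜ
    {q : {p : Y × Y // π p.1 = π p.2} × E // pE q.2 = q.1.1.1})

def homeoTransport (y : Y) (e : E) (h : π y = π (pE e)) : E :=
  (φ ⟨(⟨(y, pE e), h⟩, e), rfl⟩).1.2

theorem apply_eq_homeoTransport {y y₂ : Y} {e : E} (he : pE e = y₂) (h : π y = π y₂) :
    (φ ⟨(⟨(y, y₂), h⟩, e), he⟩).1.2 = homeoTransport φ y e (he ▸ h) := by
  subst he; rfl

theorem continuous_homeoTransport (hpE : Continuous pE) :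
    Continuous fun q : {q : Y × E // π q.1 = π (pE q.2)} => homeoTransport φ q.1.1 q.1.2 q.2 := by
  refine continuous_snd.comp (continuous_subtype_val.comp (φ.continuous.comp ?_))
  refine Continuous.subtype_mk (Continuous.prodMk ?_ (continuous_snd.comp continuous_subtype_val)) _
  exact Continuous.subtype_mk ((continuous_fst.comp continuous_subtype_val).prodMk
    (hpE.comp (continuous_snd.comp continuous_subtype_val))) _

variable {φ} (hbase : ∀ q, (φ q).1.1 = q.1.1)
include hbase

theorem pE_homeoTransport (y : Y) (e : E) (h : π y = π (pE e)) :
    pE (homeoTransport φ y e h) = y :=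
  (φ _).2.trans (congrArg (fun p => p.1.1) (hbase _))

variable (hcoc : ∀ (y₁ y₂ y₃ : Y) (h12 : π y₁ = π y₂) (h23 : π y₂ = π y₃)
      (e : E) (he : pE e = y₃),
      (φ ⟨(⟨(y₁, y₂), h12⟩, (φ ⟨(⟨(y₂, y₃), h23⟩, e), he⟩).1.2), by
          have h := (φ ⟨(⟨(y₂, y₃), h23⟩, e), he⟩).2
          rw [hbase] at h
          exact h⟩).1.2
      = (φ ⟨(⟨(y₁, y₃), h12.trans h23⟩, e), he⟩).1.2)
include hcoc

theorem homeoTransport_homeoTransport (y₁ y₂ : Y) (e : E) (h₂ : π y₂ = π (pE e))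
    (h₁ : π y₁ = π (pE (homeoTransport φ y₂ e h₂))) (h : π y₁ = π (pE e)) :
    homeoTransport φ y₁ (homeoTransport φ y₂ e h₂) h₁ = homeoTransport φ y₁ e h := by
  have h₁₂ : π y₁ = π y₂ := h₁.trans (congrArg π (pE_homeoTransport hbase y₂ e h₂))
  exact (apply_eq_homeoTransport φ (pE_homeoTransport hbase y₂ e h₂) h₁₂).symm.trans
    (hcoc y₁ y₂ (pE e) h₁₂ h₂ e rfl)

/-- Over the diagonal the cocycle condition gives `φ ∘ φ = φ`, so `φ = id` by injectivity. -/
theorem homeoTransport_self (e : E) : homeoTransport φ (pE e) e rfl = e := by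
  have hidem : φ ⟨(⟨(pE e, pE e), rfl⟩, homeoTransport φ (pE e) e rfl),
      pE_homeoTransport hbase _ _ _⟩ = φ ⟨(⟨(pE e, pE e), rfl⟩, e), rfl⟩ :=
    Subtype.ext (Prod.ext (by rw [hbase, hbase]) (hcoc (pE e) (pE e) (pE e) rfl rfl e rfl))
  exact congrArg (fun q => q.1.2) (φ.injective hidem)

def DescentDatum.ofHomeomorph (hpE : Continuous pE) : DescentDatum π pE where
  transport := homeoTransport φ
  continuous_transport := continuous_homeoTransport φ hpE
  pE_transport := pE_homeoTransport hbase
  transport_self := homeoTransport_self hbase hcoc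
  transport_transport := homeoTransport_homeoTransport hbase hcoc

end OfHomeomorph

/-- descent for fiber bundles along maps with local sections.
Let `π : Y → M` be a continuous surjection admitting local continuous sections,
and let `pE : E → Y` be a locally trivial fiber bundle with fiber `V`.
Suppose `φ` is an isomorphism `π₂*E ≅ π₁*E` of bundles over the fiber product
`Y^[2] = {(y₁, y₂) | π y₁ = π y₂}` (a homeomorphism of total spaces commuting
with the projections to `Y^[2]`), satisfying the cocycle condition
`φ_{(y₁,y₂)} ∘ φ_{(y₂,y₃)} = φ_{(y₁,y₃)}` over `Y^[3]`.  Then there is a locally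
trivial fiber bundle `Ẽ → M` with fiber `V` and an isomorphism `E ≅ π*Ẽ` of
bundles over `Y`. -/
theorem descent_of_fiber_bundle
    {Y : Type u} {M : Type v} {E : Type w} {V : Type z}
    [TopologicalSpace Y] [TopologicalSpace M] [TopologicalSpace E] [TopologicalSpace V]
    (π : Y → M) (hπ_cont : Continuous π)
    (hsec : ∀ m : M, ∃ U : Set M, IsOpen U ∧ m ∈ U ∧
      ∃ s : U → Y, Continuous s ∧ ∀ u : U, π (s u) = (u : M))
    (pE : E → Y) (hE : IsLocTrivBundle V pE)
    (φ : {q : {p : Y × Y // π p.1 = π p.2} × E // pE q.2 = q.1.1.2} ≃ₜ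
         {q : {p : Y × Y // π p.1 = π p.2} × E // pE q.2 = q.1.1.1})
    (hbase : ∀ q, (φ q).1.1 = q.1.1)
    (hcoc : ∀ (y₁ y₂ y₃ : Y) (h12 : π y₁ = π y₂) (h23 : π y₂ = π y₃)
      (e : E) (he : pE e = y₃),
      (φ ⟨(⟨(y₁, y₂), h12⟩, (φ ⟨(⟨(y₂, y₃), h23⟩, e), he⟩).1.2), by
          have h := (φ ⟨(⟨(y₂, y₃), h23⟩, e), he⟩).2
          rw [hbase] at h
          exact h⟩).1.2
      = (φ ⟨(⟨(y₁, y₃), h12.trans h23⟩, e), he⟩).1.2) :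
    ∃ (Et : Type (max u v w z)) (_ : TopologicalSpace Et) (pt : Et → M),
      IsLocTrivBundle V pt ∧
      ∃ ψ : E ≃ₜ {q : Y × Et // pt q.2 = π q.1}, ∀ e : E, (ψ e).1.1 = pE e := by
  let D := DescentDatum.ofHomeomorph hbase hcoc hE.1
  refine ⟨ULift.{max u v z} D.Total, inferInstance, D.proj ∘ ULift.down,
    (D.isLocTrivBundle hπ_cont hE hsec).comp_homeomorph Homeomorph.ulift, ?_⟩
  let liftFibre : {q : Y × D.Total // D.proj q.2 = π q.1} ≃ₜ
      {q : Y × ULift.{max u v z} D.Total // D.proj q.2.down = π q.1} :=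
    ((Homeomorph.refl Y).prodCongr Homeomorph.ulift.symm).subtype fun _ => Iff.rfl
  exact ⟨(D.pullbackHomeomorph hπ_cont hE.1 hsec).trans liftFibre, fun _ => rfl⟩
end
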